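/- arXiv:2401.14834 — 7 statements merged into one kernel-verified Lean document; each statement's English description precedes it below -/
import Mathlib

section
/- Let (M, 0, +) be a partial commutative monoid, let I be a finite set, and let (I_j)_{j∈J} be a finite family of pairwise disjoint sets with ⋃_{j∈J} I_j = I. Let (a_i)_{i∈I} be a family in M. The following are equivalent: (1) (a_i)_{i∈I} is summable; (2) for every j ∈ J the family (a_i)_{i∈I_j} is summable and the family (∑_{i∈I_j} a_i)_{j∈J} is summable. When these hold, ∑_{i∈I} a_i = ∑_{j∈J} ∑_{i∈I_j} a_i. -/
/-- A partial commutative monoid: `add` is a partial binary operation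
represented via `Option`. -/
structure PCM (M : Type*) where
  zero : M
  add : M → M → Option M
  zero_add : ∀ a, add zero a = some a
  comm : ∀ a b c, add a b = some c → add b a = some c
  assoc : ∀ a b c s t, add a b = some s → add s c = some t →
    ∃ u, add b c = some u ∧ add a u = some t

/-- The (partial) sum of a finite sequence of elements, defined inductively. -/
def PCM.sumList {M : Type*} (P : PCM M) (l : List M) : Option M :=
  l.foldl (fun acc a => acc.bind fun s => P.add s a) (some P.zero)

/-- A finite family `(a i)_{i ∈ s}` is summable if some repetition-free
enumeration of `s` yields a summable sequence. -/
def PCM.SummableFam {M α : Type*} (P : PCM M) (s : Finset α) (a : α → M) : Prop :=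
  ∃ l : List α, l.Nodup ∧ (∀ i, i ∈ l ↔ i ∈ s) ∧ (P.sumList (l.map a)).isSome

/-- The (partial) sum of a finite family, computed along an enumeration of the
index set (by permutation-invariance this does not depend on the enumeration). -/
noncomputable def PCM.famSum {M α : Type*} (P : PCM M) (s : Finset α) (a : α → M) :
    Option M :=
  P.sumList (s.toList.map a)

/-!
Adjoining `none` as an absorbing "undefined" element turns a partial commutative monoid into a
total commutative monoid, in which `PCM.sumList` is ordinary list summation and `PCM.famSum` is a
`Finset` sum. Generalized associativity is then `Finset.sum_biUnion`, and the sum over `I` is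
defined exactly when every block sum is defined and so is the sum of the block sums, because an
undefined block sum absorbs the whole sum.
-/

namespace PCM

variable {M : Type*} (P : PCM M)

theorem add_comm (x y : M) : P.add x y = P.add y x :=
  Option.ext fun _ => ⟨P.comm _ _ _, P.comm _ _ _⟩

theorem add_zero (x : M) : P.add x P.zero = some x :=
  P.comm _ _ _ (P.zero_add x)

theorem bind_add_assoc (x y z : M) :
    (P.add x y).bind (P.add · z) = (P.add y z).bind (P.add x) := by
  refine Option.ext fun t => ?_
  simp only [Option.bind_eq_some_iff]
  constructor
  · rintro ⟨s, hxy, hsz⟩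
    exact P.assoc x y z s t hxy hsz
  · rintro ⟨u, hyz, hxu⟩
    obtain ⟨v, hyx, hzv⟩ := P.assoc z y x u t (P.comm _ _ _ hyz) (P.comm _ _ _ hxu)
    exact ⟨v, P.comm _ _ _ hyx, P.comm _ _ _ hzv⟩

/-- `⟨none⟩` stands for an undefined sum. -/
structure Total (P : PCM M) where
  val : Option M

namespace Total

variable {P}

instance : Add P.Total := ⟨fun x y => ⟨x.val.bind fun s => y.val.bind (P.add s)⟩⟩

instance : Zero P.Total := ⟨⟨some P.zero⟩⟩

theorem mk_add_mk (x y : Option M) :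
    (⟨x⟩ + ⟨y⟩ : P.Total) = ⟨x.bind fun s => y.bind (P.add s)⟩ := rfl

theorem zero_def : (0 : P.Total) = ⟨some P.zero⟩ := rfl

instance : AddCommMonoid P.Total where
  add_assoc := by
    rintro ⟨_ | x⟩ ⟨_ | y⟩ ⟨_ | z⟩ <;> simp [mk_add_mk, bind_add_assoc]
  zero_add := by rintro ⟨_ | x⟩ <;> simp [mk_add_mk, zero_def, P.zero_add]
  add_zero := by rintro ⟨_ | x⟩ <;> simp [mk_add_mk, zero_def, P.add_zero]
  add_comm := by rintro ⟨_ | x⟩ ⟨_ | y⟩ <;> simp [mk_add_mk, P.add_comm]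
  nsmul := nsmulRec

theorem isSome_of_isSome_sum {α : Type*} {s : Finset α} {f : α → P.Total}
    (h : (∑ j ∈ s, f j).val.isSome) {i : α} (hi : i ∈ s) : (f i).val.isSome := by
  classical
  rw [← Finset.add_sum_erase s f hi] at h
  exact Option.isSome_of_isSome_bind h

end Total

theorem sumList_eq_sum (l : List M) :
    (⟨P.sumList l⟩ : P.Total) = (l.map fun m => (⟨some m⟩ : P.Total)).sum := by
  rw [List.sum_eq_foldl, List.foldl_map, Total.zero_def, sumList]
  exact (List.foldl_hom Total.mk fun _ _ => rfl).symm

variable {α : Type*}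

theorem famSum_eq_sum (s : Finset α) (a : α → M) :
    (⟨P.famSum s a⟩ : P.Total) = ∑ i ∈ s, ⟨some (a i)⟩ := by
  rw [famSum, sumList_eq_sum, List.map_map, ← Finset.sum_map_toList]
  rfl

theorem sumList_map_eq_famSum {s : Finset α} {l : List α} (hl : l.Nodup)
    (hs : ∀ i, i ∈ l ↔ i ∈ s) (a : α → M) : P.sumList (l.map a) = P.famSum s a := by
  have hperm : l.Perm s.toList :=
    (List.perm_ext_iff_of_nodup hl s.nodup_toList).mpr fun i => by rw [hs, Finset.mem_toList]
  suffices (⟨P.sumList (l.map a)⟩ : P.Total) = ⟨P.famSum s a⟩ from Total.mk.inj this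
  rw [famSum, sumList_eq_sum, sumList_eq_sum]
  exact ((hperm.map a).map _).sum_eq

theorem summableFam_iff_isSome (s : Finset α) (a : α → M) :
    P.SummableFam s a ↔ (P.famSum s a).isSome := by
  constructor
  · rintro ⟨l, hl, hs, hsum⟩
    rwa [P.sumList_map_eq_famSum hl hs] at hsum
  · exact fun h => ⟨s.toList, s.nodup_toList, fun _ => Finset.mem_toList, h⟩

theorem famSum_getD_eq_sum {s : Finset α} {f : α → Option M} (hf : ∀ i ∈ s, (f i).isSome) :
    (⟨P.famSum s fun i => (f i).getD P.zero⟩ : P.Total) = ∑ i ∈ s, ⟨f i⟩ := by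
  rw [famSum_eq_sum]
  exact Finset.sum_congr rfl fun i hi =>
    congrArg Total.mk (Option.getD_of_ne_none (Option.isSome_iff_ne_none.mp (hf i hi)) _)

theorem famSum_biUnion {β : Type*} [DecidableEq α] {J : Finset β} {Is : β → Finset α}
    (hdisj : (J : Set β).PairwiseDisjoint Is) (a : α → M) :
    (⟨P.famSum (J.biUnion Is) a⟩ : P.Total) = ∑ j ∈ J, ⟨P.famSum (Is j) a⟩ := by
  simp only [famSum_eq_sum]
  exact Finset.sum_biUnion hdisj

end PCM

theorem stmt1 {M α β : Type*} [DecidableEq α] (P : PCM M)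
    (I : Finset α) (J : Finset β) (Is : β → Finset α)
    (hdisj : ∀ j ∈ J, ∀ j' ∈ J, j ≠ j' → Disjoint (Is j) (Is j'))
    (hcover : I = J.biUnion Is) (a : α → M) :
    (P.SummableFam I a ↔
      (∀ j ∈ J, P.SummableFam (Is j) a) ∧
        P.SummableFam J (fun j => (P.famSum (Is j) a).getD P.zero)) ∧
    (P.SummableFam I a →
      P.famSum I a = P.famSum J (fun j => (P.famSum (Is j) a).getD P.zero)) := by
  simp only [PCM.summableFam_iff_isSome]
  have hI : (⟨P.famSum I a⟩ : P.Total) = ∑ j ∈ J, ⟨P.famSum (Is j) a⟩ := by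
    rw [hcover]
    exact P.famSum_biUnion (fun j hj j' hj' => hdisj j hj j' hj') a
  have hblocks (h : (P.famSum I a).isSome) : ∀ j ∈ J, (P.famSum (Is j) a).isSome :=
    fun _ => PCM.Total.isSome_of_isSome_sum (f := fun j => ⟨P.famSum (Is j) a⟩)
      (by rw [← hI]; exact h)
  have hJ (h : ∀ j ∈ J, (P.famSum (Is j) a).isSome) :
      P.famSum J (fun j => (P.famSum (Is j) a).getD P.zero) = P.famSum I a :=
    congrArg PCM.Total.val ((P.famSum_getD_eq_sum h).trans hI.symm)
  refine ⟨⟨fun h => ⟨hblocks h, ?_⟩, fun ⟨hall, hsum⟩ => ?_⟩, fun h => (hJ (hblocks h)).symm⟩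
  · rwa [hJ (hblocks h)]
  · rwa [← hJ hall]
end

section
/- Let 𝓛 be a category with zero morphisms equipped with a pre-summability structure (S, π₀, π₁, σ) satisfying (S-wit). Then there is a unique natural transformation c_X ∈ 𝓛(S²X, S²X) such that π_i∘π_j∘c_X = π_j∘π_i for all i, j ∈ {0,1}. Moreover c_X∘c_X = id_{S²X} and c_X = ⟨S(π₀), S(π₁)⟩. -/
open CategoryTheory Limits

universe v u

/-- A pre-summability structure on a category with zero morphisms: a functor `S`
together with jointly monic natural transformations `π₀, π₁ : S ⟶ 𝟭 C` and a
natural transformation `σ : S ⟶ 𝟭 C`. -/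
structure PreSummability (C : Type u) [Category.{v} C] [HasZeroMorphisms C] where
  S : C ⥤ C
  π0 : S ⟶ 𝟭 C
  π1 : S ⟶ 𝟭 C
  σ : S ⟶ 𝟭 C
  jointly_monic : ∀ {Y X : C} (f g : Y ⟶ S.obj X),
    f ≫ π0.app X = g ≫ π0.app X → f ≫ π1.app X = g ≫ π1.app X → f = g

namespace PreSummability

variable {C : Type u} [Category.{v} C] [HasZeroMorphisms C] (P : PreSummability C)

/-- Two morphisms are summable when they admit a (necessarily unique) witness. -/
def Summable {Y X : C} (f₀ f₁ : Y ⟶ X) : Prop :=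
  ∃ h : Y ⟶ P.S.obj X, h ≫ P.π0.app X = f₀ ∧ h ≫ P.π1.app X = f₁

/-- The witness `⟨f₀, f₁⟩` of a summable pair (an arbitrary value if the pair is
not summable). -/
noncomputable def witness {Y X : C} (f₀ f₁ : Y ⟶ X) : Y ⟶ P.S.obj X :=
  @dite _ (P.Summable f₀ f₁) (Classical.propDecidable _) (fun h => h.choose) (fun _ => 0)

/-- The sum `f₀ + f₁ = σ ∘ ⟨f₀, f₁⟩` of a summable pair. -/
noncomputable def sum {Y X : C} (f₀ f₁ : Y ⟶ X) : Y ⟶ X :=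
  P.witness f₀ f₁ ≫ P.σ.app X

/-- Projections indexed by a boolean. -/
def pr (i : Bool) : P.S ⟶ 𝟭 C := if i then P.π1 else P.π0

/-- Axiom (S-com): `π₁` and `π₀` are summable with `π₁ + π₀ = σ`. -/
def SCom : Prop := ∀ X : C,
  P.Summable (P.π1.app X) (P.π0.app X) ∧ P.sum (P.π1.app X) (P.π0.app X) = P.σ.app X

/-- Axiom (S-zero): `0` and `id` are summable with `0 + id = id`. -/
def SZero : Prop := ∀ X : C,
  P.Summable (0 : X ⟶ X) (𝟙 X) ∧ P.sum (0 : X ⟶ X) (𝟙 X) = 𝟙 X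

/-- Axiom (S-wit): if `σ∘f₀` and `σ∘f₁` are summable then `f₀` and `f₁` are summable. -/
def SWit : Prop := ∀ (X Y : C) (f₀ f₁ : X ⟶ P.S.obj Y),
  P.Summable (f₀ ≫ P.σ.app Y) (f₁ ≫ P.σ.app Y) → P.Summable f₀ f₁

end PreSummability

open PreSummability

/-- The defining property of the flip `c` on `S²`:
`π_i ∘ π_j ∘ c = π_j ∘ π_i` for all `i, j ∈ {0,1}`, together with naturality. -/
def IsFlip {C : Type u} [Category.{v} C] [HasZeroMorphisms C]
    (P : PreSummability C)
    (c : ∀ X : C, P.S.obj (P.S.obj X) ⟶ P.S.obj (P.S.obj X)) : Prop :=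
  (∀ {X Y : C} (f : X ⟶ Y),
      P.S.map (P.S.map f) ≫ c Y = c X ≫ P.S.map (P.S.map f)) ∧
  (∀ (X : C) (i j : Bool),
      c X ≫ (P.pr j).app (P.S.obj X) ≫ (P.pr i).app X =
        (P.pr i).app (P.S.obj X) ≫ (P.pr j).app X)

namespace PreSummability

variable {C : Type u} [Category.{v} C] [HasZeroMorphisms C] (P : PreSummability C)

lemma pr_naturality (i : Bool) {A B : C} (g : A ⟶ B) :
    P.S.map g ≫ (P.pr i).app B = (P.pr i).app A ≫ g := by
  cases i
  · exact P.π0.naturality g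
  · exact P.π1.naturality g

lemma map_pr_comp_pr (i j : Bool) (X : C) :
    P.S.map ((P.pr j).app X) ≫ (P.pr i).app X = (P.pr i).app (P.S.obj X) ≫ (P.pr j).app X :=
  P.pr_naturality i _

lemma hom_ext_pr {Y X : C} {f g : Y ⟶ P.S.obj X}
    (h : ∀ i : Bool, f ≫ (P.pr i).app X = g ≫ (P.pr i).app X) : f = g :=
  P.jointly_monic f g (h false) (h true)

lemma witness_comp_pr {Y X : C} {f₀ f₁ : Y ⟶ X} (h : P.Summable f₀ f₁) (i : Bool) :
    P.witness f₀ f₁ ≫ (P.pr i).app X = if i then f₁ else f₀ := by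
  obtain ⟨h₀, h₁⟩ : P.witness f₀ f₁ ≫ P.π0.app X = f₀ ∧ P.witness f₀ f₁ ≫ P.π1.app X = f₁ := by
    rw [witness, dif_pos h]
    exact h.choose_spec
  cases i
  · exact h₀
  · exact h₁

/-- Naturality of `σ` shows that `σ_{SX}` witnesses the summability of `σ ∘ S(π₀)` and
`σ ∘ S(π₁)`, so (S-wit) applies. -/
lemma summable_map_π0_map_π1 (hwit : P.SWit) (X : C) :
    P.Summable (X := P.S.obj X) (P.S.map (P.π0.app X)) (P.S.map (P.π1.app X)) :=
  hwit _ _ _ _ ⟨P.σ.app (P.S.obj X), (P.σ.naturality (P.π0.app X)).symm,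
    (P.σ.naturality (P.π1.app X)).symm⟩

lemma witness_map_π_comp_pr (hwit : P.SWit) (X : C) (j : Bool) :
    P.witness (P.S.map (P.π0.app X)) (P.S.map (P.π1.app X)) ≫ (P.pr j).app (P.S.obj X) =
      P.S.map ((P.pr j).app X) := by
  rw [witness_comp_pr P (P.summable_map_π0_map_π1 hwit X)]
  cases j <;> rfl

/-- Naturality of `π_i` turns `π_i ∘ S(π_j)` into `π_j ∘ π_i`, so by joint monicity the
flip equations say exactly `π_j ∘ c_X = S(π_j)`. -/
lemma isFlip_iff (c : ∀ X : C, P.S.obj (P.S.obj X) ⟶ P.S.obj (P.S.obj X)) :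
    IsFlip P c ↔
      ∀ (X : C) (j : Bool), c X ≫ (P.pr j).app (P.S.obj X) = P.S.map ((P.pr j).app X) := by
  constructor
  · intro hc X j
    refine P.hom_ext_pr fun i => ?_
    rw [Category.assoc, hc.2 X i j, map_pr_comp_pr]
  · intro hc
    refine ⟨fun {X Y} f => P.hom_ext_pr fun j => ?_, fun X i j => ?_⟩
    · rw [Category.assoc, hc Y j, ← P.S.map_comp, pr_naturality, Category.assoc,
        pr_naturality, ← Category.assoc, hc X j, ← P.S.map_comp]
    · rw [← Category.assoc, hc X j, map_pr_comp_pr]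

lemma isFlip_witness (hwit : P.SWit) :
    IsFlip P fun X => P.witness (P.S.map (P.π0.app X)) (P.S.map (P.π1.app X)) :=
  (P.isFlip_iff _).2 (P.witness_map_π_comp_pr hwit)

variable {P}

lemma _root_.IsFlip.eq_witness (hwit : P.SWit) {c : ∀ X : C, P.S.obj (P.S.obj X) ⟶ P.S.obj (P.S.obj X)}
    (hc : IsFlip P c) (X : C) :
    c X = P.witness (P.S.map (P.π0.app X)) (P.S.map (P.π1.app X)) :=
  P.hom_ext_pr fun j => by
    rw [(P.isFlip_iff c).1 hc X j, P.witness_map_π_comp_pr hwit X j]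

lemma _root_.IsFlip.comp_self {c : ∀ X : C, P.S.obj (P.S.obj X) ⟶ P.S.obj (P.S.obj X)}
    (hc : IsFlip P c) (X : C) : c X ≫ c X = 𝟙 (P.S.obj (P.S.obj X)) := by
  refine P.hom_ext_pr fun j => ?_
  rw [Category.assoc, (P.isFlip_iff c).1 hc X j, Category.id_comp]
  refine P.hom_ext_pr fun i => ?_
  rw [Category.assoc, map_pr_comp_pr, hc.2 X j i]

end PreSummability

theorem stmt6 {C : Type u} [Category.{v} C] [HasZeroMorphisms C]
    (P : PreSummability C) (hwit : P.SWit) :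
    (∃! c : ∀ X : C, P.S.obj (P.S.obj X) ⟶ P.S.obj (P.S.obj X), IsFlip P c) ∧
    (∀ c : ∀ X : C, P.S.obj (P.S.obj X) ⟶ P.S.obj (P.S.obj X), IsFlip P c →
      (∀ X : C, c X ≫ c X = 𝟙 (P.S.obj (P.S.obj X))) ∧
      (∀ X : C, c X = P.witness (P.S.map (P.π0.app X)) (P.S.map (P.π1.app X)))) :=
  ⟨⟨_, P.isFlip_witness hwit, fun _ hc => funext (hc.eq_witness hwit)⟩,
    fun _ hc => ⟨hc.comp_self, hc.eq_witness hwit⟩⟩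
end

section
/- Let 𝓛 be a category with zero morphisms equipped with a pre-summability structure (S, π₀, π₁, σ) satisfying (S-wit), and let c_X ∈ 𝓛(S²X, S²X) be the unique natural morphism with π_i∘π_j∘c_X = π_j∘π_i for all i,j ∈ {0,1}. Then S(σ_X)∘c_X = σ_{S X}, i.e. the triangle with vertices S²X, S²X, SX formed by c_X, S(σ_X) and σ_{S X} commutes. -/
open CategoryTheory Limits

universe v u

open PreSummability

theorem stmt7 {C : Type u} [Category.{v} C] [HasZeroMorphisms C]
    (P : PreSummability C) (hwit : P.SWit)
    (c : ∀ X : C, P.S.obj (P.S.obj X) ⟶ P.S.obj (P.S.obj X))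
    (hnat : ∀ {X Y : C} (f : X ⟶ Y),
      P.S.map (P.S.map f) ≫ c Y = c X ≫ P.S.map (P.S.map f))
    (hc : ∀ (X : C) (i j : Bool),
      c X ≫ (P.pr j).app (P.S.obj X) ≫ (P.pr i).app X =
        (P.pr i).app (P.S.obj X) ≫ (P.pr j).app X) :
    ∀ X : C, c X ≫ P.S.map (P.σ.app X) = P.σ.app (P.S.obj X) := by
  intro X
  have key0 : c X ≫ P.π0.app (P.S.obj X) = P.S.map (P.π0.app X) := by
    apply P.jointly_monic
    · have h := hc X false false
      simp only [pr, Bool.false_eq_true, if_false] at h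
      have hn := P.π0.naturality (P.π0.app X)
      simp only [Functor.id_map, Functor.id_obj] at hn
      rw [Category.assoc, h]; exact hn.symm
    · have h := hc X true false
      simp only [pr, Bool.false_eq_true, if_false, if_true] at h
      have hn := P.π1.naturality (P.π0.app X)
      simp only [Functor.id_map, Functor.id_obj] at hn
      rw [Category.assoc, h]; exact hn.symm
  have key1 : c X ≫ P.π1.app (P.S.obj X) = P.S.map (P.π1.app X) := by
    apply P.jointly_monic
    · have h := hc X false true
      simp only [pr, Bool.false_eq_true, if_false, if_true] at h
      have hn := P.π0.naturality (P.π1.app X)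
      simp only [Functor.id_map, Functor.id_obj] at hn
      rw [Category.assoc, h]; exact hn.symm
    · have h := hc X true true
      simp only [pr, if_true] at h
      have hn := P.π1.naturality (P.π1.app X)
      simp only [Functor.id_map, Functor.id_obj] at hn
      rw [Category.assoc, h]; exact hn.symm
  apply P.jointly_monic
  · have hn := P.π0.naturality (P.σ.app X)
    have hs := P.σ.naturality (P.π0.app X)
    simp only [Functor.id_map, Functor.id_obj] at hn hs ⊢
    rw [Category.assoc, hn, ← Category.assoc, key0]; exact hs
  · have hn := P.π1.naturality (P.σ.app X)
    have hs := P.σ.naturality (P.π1.app X)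
    simp only [Functor.id_map, Functor.id_obj] at hn hs ⊢
    rw [Category.assoc, hn, ← Category.assoc, key1]; exact hs
end

section
/- Let 𝓛 be a category with zero morphisms equipped with a pre-summability structure (S, π₀, π₁, σ) satisfying (S-wit). Let (f_{ij} ∈ 𝓛(X,Y))_{i,j ∈ {0,1}} be such that f_{i0} and f_{i1} are summable for i = 0,1, and the sums (f_{00}+f_{01}) and (f_{10}+f_{11}) are summable. Then f_{0j} and f_{1j} are summable for j = 0,1, the sums (f_{00}+f_{10}) and (f_{01}+f_{11}) are summable, and (f_{00}+f_{01}) + (f_{10}+f_{11}) = (f_{00}+f_{10}) + (f_{01}+f_{11}). -/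
open CategoryTheory Limits

universe v u

open PreSummability

theorem stmt8 {C : Type u} [Category.{v} C] [HasZeroMorphisms C]
    (P : PreSummability C) (hwit : P.SWit) {X Y : C}
    (f00 f01 f10 f11 : X ⟶ Y)
    (h0 : P.Summable f00 f01) (h1 : P.Summable f10 f11)
    (hs : P.Summable (P.sum f00 f01) (P.sum f10 f11)) :
    P.Summable f00 f10 ∧ P.Summable f01 f11 ∧
    P.Summable (P.sum f00 f10) (P.sum f01 f11) ∧
    P.sum (P.sum f00 f01) (P.sum f10 f11) = P.sum (P.sum f00 f10) (P.sum f01 f11) := by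
  obtain ⟨w0, hw00, hw01⟩ := h0
  obtain ⟨w1, hw10, hw11⟩ := h1
  have sum_eq : ∀ {A B : C} (a b : A ⟶ B) (g : A ⟶ P.S.obj B),
      g ≫ P.π0.app B = a → g ≫ P.π1.app B = b → P.sum a b = g ≫ P.σ.app B := by
    intro A B a b g hg0 hg1
    have hsum : P.Summable a b := ⟨g, hg0, hg1⟩
    have hch := hsum.choose_spec
    have : hsum.choose = g := P.jointly_monic _ _ (hch.1.trans hg0.symm) (hch.2.trans hg1.symm)
    simp [PreSummability.sum, PreSummability.witness, dif_pos hsum, this]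
  have e0 : P.sum f00 f01 = w0 ≫ P.σ.app Y := sum_eq _ _ _ hw00 hw01
  have e1 : P.sum f10 f11 = w1 ≫ P.σ.app Y := sum_eq _ _ _ hw10 hw11
  have hsw : P.Summable w0 w1 := by
    apply hwit
    rw [← e0, ← e1]; exact hs
  obtain ⟨h, hh0, hh1⟩ := hsw
  have n0 : P.π0.app (P.S.obj Y) ≫ P.π0.app Y = P.S.map (P.π0.app Y) ≫ P.π0.app Y := by
    simpa using (P.π0.naturality (P.π0.app Y)).symm
  have n1 : P.π1.app (P.S.obj Y) ≫ P.π0.app Y = P.S.map (P.π0.app Y) ≫ P.π1.app Y := by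
    simpa using (P.π1.naturality (P.π0.app Y)).symm
  have m0 : P.π0.app (P.S.obj Y) ≫ P.π1.app Y = P.S.map (P.π1.app Y) ≫ P.π0.app Y := by
    simpa using (P.π0.naturality (P.π1.app Y)).symm
  have m1 : P.π1.app (P.S.obj Y) ≫ P.π1.app Y = P.S.map (P.π1.app Y) ≫ P.π1.app Y := by
    simpa using (P.π1.naturality (P.π1.app Y)).symm
  -- column witnesses
  have c0_0 : (h ≫ P.S.map (P.π0.app Y)) ≫ P.π0.app Y = f00 := by
    rw [Category.assoc, ← n0, ← Category.assoc, hh0, hw00]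
  have c0_1 : (h ≫ P.S.map (P.π0.app Y)) ≫ P.π1.app Y = f10 := by
    rw [Category.assoc, ← n1, ← Category.assoc, hh1, hw10]
  have c1_0 : (h ≫ P.S.map (P.π1.app Y)) ≫ P.π0.app Y = f01 := by
    rw [Category.assoc, ← m0, ← Category.assoc, hh0, hw01]
  have c1_1 : (h ≫ P.S.map (P.π1.app Y)) ≫ P.π1.app Y = f11 := by
    rw [Category.assoc, ← m1, ← Category.assoc, hh1, hw11]
  refine ⟨⟨_, c0_0, c0_1⟩, ⟨_, c1_0, c1_1⟩, ?_, ?_⟩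
  · -- h ≫ σ.app (S Y) witnesses (sum f00 f10, sum f01 f11)
    have s0 : P.σ.app (P.S.obj Y) ≫ P.π0.app Y = P.S.map (P.π0.app Y) ≫ P.σ.app Y := by
      simpa using (P.σ.naturality (P.π0.app Y)).symm
    have s1 : P.σ.app (P.S.obj Y) ≫ P.π1.app Y = P.S.map (P.π1.app Y) ≫ P.σ.app Y := by
      simpa using (P.σ.naturality (P.π1.app Y)).symm
    refine ⟨h ≫ P.σ.app (P.S.obj Y), ?_, ?_⟩
    · rw [Category.assoc, s0, ← Category.assoc]
      exact (sum_eq _ _ _ c0_0 c0_1).symm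
    · rw [Category.assoc, s1, ← Category.assoc]
      exact (sum_eq _ _ _ c1_0 c1_1).symm
  · -- interchange
    have s0 : P.σ.app (P.S.obj Y) ≫ P.π0.app Y = P.S.map (P.π0.app Y) ≫ P.σ.app Y := by
      simpa using (P.σ.naturality (P.π0.app Y)).symm
    have s1 : P.σ.app (P.S.obj Y) ≫ P.π1.app Y = P.S.map (P.π1.app Y) ≫ P.σ.app Y := by
      simpa using (P.σ.naturality (P.π1.app Y)).symm
    have sσ : P.σ.app (P.S.obj Y) ≫ P.σ.app Y = P.S.map (P.σ.app Y) ≫ P.σ.app Y := by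
      simpa using (P.σ.naturality (P.σ.app Y)).symm
    have lhs_wit0 : (h ≫ P.S.map (P.σ.app Y)) ≫ P.π0.app Y = P.sum f00 f01 := by
      have : P.π0.app (P.S.obj Y) ≫ P.σ.app Y = P.S.map (P.σ.app Y) ≫ P.π0.app Y := by
        simpa using (P.π0.naturality (P.σ.app Y)).symm
      rw [Category.assoc, ← this, ← Category.assoc, hh0, e0]
    have lhs_wit1 : (h ≫ P.S.map (P.σ.app Y)) ≫ P.π1.app Y = P.sum f10 f11 := by
      have : P.π1.app (P.S.obj Y) ≫ P.σ.app Y = P.S.map (P.σ.app Y) ≫ P.π1.app Y := by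
        simpa using (P.π1.naturality (P.σ.app Y)).symm
      rw [Category.assoc, ← this, ← Category.assoc, hh1, e1]
    have rhs_wit0 : (h ≫ P.σ.app (P.S.obj Y)) ≫ P.π0.app Y = P.sum f00 f10 := by
      rw [Category.assoc, s0, ← Category.assoc]
      exact (sum_eq _ _ _ c0_0 c0_1).symm
    have rhs_wit1 : (h ≫ P.σ.app (P.S.obj Y)) ≫ P.π1.app Y = P.sum f01 f11 := by
      rw [Category.assoc, s1, ← Category.assoc]
      exact (sum_eq _ _ _ c1_0 c1_1).symm
    rw [sum_eq _ _ _ lhs_wit0 lhs_wit1, sum_eq _ _ _ rhs_wit0 rhs_wit1,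
      Category.assoc, Category.assoc, sσ]
    rfl
end

section
/- Let 𝓛 be a summable category, i.e. a category with zero morphisms equipped with a summability structure (S, π₀, π₁, σ) (satisfying (S-com), (S-zero) and (S-wit)). Then every hom-set 𝓛(X,Y), equipped with the zero morphism 0 and the partial addition f₀ + f₁ = σ∘⟨f₀,f₁⟩ (defined exactly when f₀ and f₁ are summable), is a partial commutative monoid: 0 + f is defined and equals f; if f + g is defined then g + f is defined and f + g = g + f; and if f + g and (f + g) + h are defined then g + h and f + (g + h) are defined and (f + g) + h = f + (g + h). -/
open CategoryTheory Limits

universe v u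

namespace PreSummability

variable {C : Type u} [Category.{v} C] [HasZeroMorphisms C] (P : PreSummability C)

lemma nat0 (A B : C) (f : A ⟶ B) :
    P.S.map f ≫ P.π0.app B = P.π0.app A ≫ f := by simpa using P.π0.naturality f

lemma nat1 (A B : C) (f : A ⟶ B) :
    P.S.map f ≫ P.π1.app B = P.π1.app A ≫ f := by simpa using P.π1.naturality f

lemma natσ (A B : C) (f : A ⟶ B) :
    P.S.map f ≫ P.σ.app B = P.σ.app A ≫ f := by simpa using P.σ.naturality f

lemma witness_spec {B A : C} {f₀ f₁ : B ⟶ A} (h : P.Summable f₀ f₁) :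
    P.witness f₀ f₁ ≫ P.π0.app A = f₀ ∧ P.witness f₀ f₁ ≫ P.π1.app A = f₁ := by
  rw [witness, dif_pos h]; exact h.choose_spec

lemma sum_eq {B A : C} {f₀ f₁ : B ⟶ A} {w : B ⟶ P.S.obj A}
    (h0 : w ≫ P.π0.app A = f₀) (h1 : w ≫ P.π1.app A = f₁) :
    P.sum f₀ f₁ = w ≫ P.σ.app A := by
  have hs : P.Summable f₀ f₁ := ⟨w, h0, h1⟩
  have hw := P.witness_spec hs
  have : P.witness f₀ f₁ = w :=
    P.jointly_monic _ _ (hw.1.trans h0.symm) (hw.2.trans h1.symm)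
  rw [sum, this]

/-- The summable pair `(π₀, π₁)` with witness `𝟙`. -/
lemma pi_summable (A : C) :
    P.Summable (P.π0.app A) (P.π1.app A) :=
  ⟨𝟙 _, Category.id_comp _, Category.id_comp _⟩

lemma sum_pi (A : C) : P.sum (P.π0.app A) (P.π1.app A) = P.σ.app A := by
  have := P.sum_eq (Category.id_comp (P.π0.app A)) (Category.id_comp (P.π1.app A))
  simpa using this

lemma summable_pre {Z B A : C} (k : Z ⟶ B) {f₀ f₁ : B ⟶ A} (h : P.Summable f₀ f₁) :
    P.Summable (k ≫ f₀) (k ≫ f₁) := by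
  obtain ⟨w, h0, h1⟩ := h
  exact ⟨k ≫ w, by rw [Category.assoc, h0], by rw [Category.assoc, h1]⟩

lemma sum_pre {Z B A : C} (k : Z ⟶ B) {f₀ f₁ : B ⟶ A} (h : P.Summable f₀ f₁) :
    P.sum (k ≫ f₀) (k ≫ f₁) = k ≫ P.sum f₀ f₁ := by
  obtain ⟨w, h0, h1⟩ := h
  rw [P.sum_eq (w := k ≫ w) (by rw [Category.assoc, h0]) (by rw [Category.assoc, h1]),
    Category.assoc, ← P.sum_eq h0 h1]

lemma summable_post {B A Z : C} (k : A ⟶ Z) {f₀ f₁ : B ⟶ A} (h : P.Summable f₀ f₁) :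
    P.Summable (f₀ ≫ k) (f₁ ≫ k) := by
  obtain ⟨w, h0, h1⟩ := h
  exact ⟨w ≫ P.S.map k,
    by rw [Category.assoc, P.nat0, ← Category.assoc, h0],
    by rw [Category.assoc, P.nat1, ← Category.assoc, h1]⟩

lemma sum_post {B A Z : C} (k : A ⟶ Z) {f₀ f₁ : B ⟶ A} (h : P.Summable f₀ f₁) :
    P.sum (f₀ ≫ k) (f₁ ≫ k) = P.sum f₀ f₁ ≫ k := by
  obtain ⟨w, h0, h1⟩ := h
  rw [P.sum_eq (w := w ≫ P.S.map k)
      (by rw [Category.assoc, P.nat0, ← Category.assoc, h0])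
      (by rw [Category.assoc, P.nat1, ← Category.assoc, h1]),
    Category.assoc, P.natσ, ← Category.assoc, ← P.sum_eq h0 h1]

lemma zero_lemma (hzero : P.SZero) {A B : C} (f : A ⟶ B) :
    P.Summable 0 f ∧ P.sum 0 f = f := by
  obtain ⟨w, h0, h1⟩ := (hzero B).1
  have e0 : (f ≫ w) ≫ P.π0.app B = (0 : A ⟶ B) := by
    rw [Category.assoc, h0, comp_zero]
  have e1 : (f ≫ w) ≫ P.π1.app B = f := by
    rw [Category.assoc, h1, Category.comp_id]
  refine ⟨⟨f ≫ w, e0, e1⟩, ?_⟩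
  have hσ : w ≫ P.σ.app B = 𝟙 B := by
    rw [← P.sum_eq h0 h1]; exact (hzero B).2
  rw [P.sum_eq e0 e1, Category.assoc, hσ, Category.comp_id]

/-- The exchange morphism coming from (S-com). -/
lemma scom_witness (hcom : P.SCom) (B : C) :
    ∃ c : P.S.obj B ⟶ P.S.obj B,
      c ≫ P.π0.app B = P.π1.app B ∧ c ≫ P.π1.app B = P.π0.app B ∧
        c ≫ P.σ.app B = P.σ.app B := by
  obtain ⟨c, h0, h1⟩ := (hcom B).1
  simp only [Functor.id_obj] at c h0 h1
  refine ⟨c, h0, h1, ?_⟩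
  rw [← P.sum_eq h0 h1]
  exact (hcom B).2

lemma comm_lemma (hcom : P.SCom) {A B : C} {f g : A ⟶ B} (h : P.Summable f g) :
    P.Summable g f ∧ P.sum f g = P.sum g f := by
  obtain ⟨c, c0, c1, cσ⟩ := P.scom_witness hcom B
  obtain ⟨w, h0, h1⟩ := h
  have e0 : (w ≫ c) ≫ P.π0.app B = g := by rw [Category.assoc, c0, h1]
  have e1 : (w ≫ c) ≫ P.π1.app B = f := by rw [Category.assoc, c1, h0]
  refine ⟨⟨w ≫ c, e0, e1⟩, ?_⟩
  rw [P.sum_eq e0 e1, Category.assoc, cσ, ← P.sum_eq h0 h1]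

end PreSummability

open PreSummability

theorem stmt10 {C : Type u} [Category.{v} C] [HasZeroMorphisms C]
    (P : PreSummability C) (hcom : P.SCom) (hzero : P.SZero) (hwit : P.SWit)
    {X Y : C} :
    (∀ f : X ⟶ Y, P.Summable 0 f ∧ P.sum 0 f = f) ∧
    (∀ f g : X ⟶ Y, P.Summable f g → P.Summable g f ∧ P.sum f g = P.sum g f) ∧
    (∀ f g h : X ⟶ Y, P.Summable f g → P.Summable (P.sum f g) h →
      P.Summable g h ∧ P.Summable f (P.sum g h) ∧
        P.sum (P.sum f g) h = P.sum f (P.sum g h)) := by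
  refine ⟨fun f => P.zero_lemma hzero f, fun f g h => P.comm_lemma hcom h, ?_⟩
  intro f g h hfg hfgh
  obtain ⟨w1, w10, w11⟩ := hfg
  obtain ⟨w0, w00, w01⟩ := (P.zero_lemma hzero h).1
  have e1 : w1 ≫ P.σ.app Y = P.sum f g := (P.sum_eq w10 w11).symm
  have e2 : w0 ≫ P.σ.app Y = h := by
    rw [← P.sum_eq w00 w01]; exact (P.zero_lemma hzero h).2
  -- the double witness H
  have hsw : P.Summable w1 w0 := by
    refine hwit _ _ _ _ ?_
    rw [e1, e2]; exact hfgh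
  obtain ⟨H, H0, H1⟩ := hsw
  -- b = H ≫ S.map π1 witnesses (g, h)
  have b0 : (H ≫ P.S.map (P.π1.app Y)) ≫ P.π0.app Y = g := by
    rw [Category.assoc, P.nat0 (B := Y), reassoc_of% H0, w11]
  have b1 : (H ≫ P.S.map (P.π1.app Y)) ≫ P.π1.app Y = h := by
    rw [Category.assoc, P.nat1 (B := Y), reassoc_of% H1, w01]
  have hgh : P.Summable g h := ⟨_, b0, b1⟩
  -- a = H ≫ S.map π0 witnesses (f, 0)
  have a0 : (H ≫ P.S.map (P.π0.app Y)) ≫ P.π0.app Y = f := by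
    rw [Category.assoc, P.nat0 (B := Y), reassoc_of% H0, w10]
  have a1 : (H ≫ P.S.map (P.π0.app Y)) ≫ P.π1.app Y = (0 : X ⟶ Y) := by
    rw [Category.assoc, P.nat1 (B := Y), reassoc_of% H1, w00]
  have hf0 : P.Summable f 0 := ⟨_, a0, a1⟩
  have sumf0 : P.sum f (0 : X ⟶ Y) = f :=
    (P.comm_lemma hcom hf0).2.trans (P.zero_lemma hzero f).2
  have aσ : (H ≫ P.S.map (P.π0.app Y)) ≫ P.σ.app Y = f := by
    have e := P.sum_eq a0 a1
    simp only [Functor.id_obj] at e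
    rw [← e, sumf0]
  have bσ : (H ≫ P.S.map (P.π1.app Y)) ≫ P.σ.app Y = P.sum g h := by
    have e := P.sum_eq b0 b1
    simp only [Functor.id_obj] at e
    exact e.symm
  -- W : witness of (S.map π0, S.map π1)
  have hSm : ∃ w : P.S.obj (P.S.obj Y) ⟶ P.S.obj (P.S.obj Y),
      w ≫ P.π0.app (P.S.obj Y) = P.S.map (P.π0.app Y) ∧
        w ≫ P.π1.app (P.S.obj Y) = P.S.map (P.π1.app Y) := by
    refine hwit _ _ _ _ ?_
    simp only [Functor.id_obj]
    rw [P.natσ (B := Y), P.natσ (B := Y)]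
    exact ⟨P.σ.app (P.S.obj Y), rfl, rfl⟩
  obtain ⟨W, W0, W1⟩ := hSm
  have hSm' : P.Summable (P.S.map (P.π0.app Y)) (P.S.map (P.π1.app Y)) := ⟨W, W0, W1⟩
  -- key : W ≫ σ_{SY} = S.map σ
  have key : W ≫ P.σ.app (P.S.obj Y) = P.S.map (P.σ.app Y) := by
    apply P.jointly_monic (X := Y)
    · rw [P.nat0 (B := Y), ← P.sum_eq W0 W1,
        ← P.sum_post (P.π0.app Y) hSm', P.nat0 (B := Y), P.nat0 (B := Y),
        P.sum_pre _ (P.pi_summable Y), P.sum_pi]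
    · rw [P.nat1 (B := Y), ← P.sum_eq W0 W1,
        ← P.sum_post (P.π1.app Y) hSm', P.nat1 (B := Y), P.nat1 (B := Y),
        P.sum_pre _ (P.pi_summable Y), P.sum_pi]
  -- K = H ≫ W ≫ S.map σ witnesses (f, g + h)
  have k0 : (H ≫ W ≫ P.S.map (P.σ.app Y)) ≫ P.π0.app Y = f := by
    rw [Category.assoc, Category.assoc, P.nat0 (B := Y), reassoc_of% W0,
      ← Category.assoc, aσ]
  have k1 : (H ≫ W ≫ P.S.map (P.σ.app Y)) ≫ P.π1.app Y = P.sum g h := by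
    rw [Category.assoc, Category.assoc, P.nat1 (B := Y), reassoc_of% W1,
      ← Category.assoc, bσ]
  refine ⟨hgh, ⟨_, k0, k1⟩, ?_⟩
  -- sums agree
  have A0 : (H ≫ P.S.map (P.σ.app Y)) ≫ P.π0.app Y = P.sum f g := by
    rw [Category.assoc, P.nat0 (B := Y), reassoc_of% H0, e1]
  have A1 : (H ≫ P.S.map (P.σ.app Y)) ≫ P.π1.app Y = h := by
    rw [Category.assoc, P.nat1 (B := Y), reassoc_of% H1, e2]
  rw [P.sum_eq A0 A1, P.sum_eq k0 k1]
  simp only [Functor.id_obj, Category.assoc]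
  rw [P.natσ (B := Y), reassoc_of% key, P.natσ (B := Y)]
end

section
/- Let 𝓛 be a summable category, i.e. a category with zero morphisms equipped with a summability structure (S, π₀, π₁, σ). Then there is a natural transformation τ_X ∈ 𝓛(S²X, S X) characterized by π₀∘τ_X = π₀∘π₀ and π₁∘τ_X = π₀∘π₁ + π₁∘π₀. Moreover τ_X∘c_X = τ_X, where c_X is the flip on S²X. -/
/-!
Write `xᵢⱼ = πⱼ ∘ πᵢ` for the four components of a point of `S²X`, so that `Sπ₀ = ⟨x₀₀, x₁₀⟩`
and `π₀ ∘ σ = x₀₀ + x₁₀`. The pair `⟨ι₀ ∘ π₀ ∘ σ, Sπ₁⟩` has `σ`-images `π₀ ∘ σ` and `π₁ ∘ σ`,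
witnessed by `σ`, so it is summable by (S-wit); composing with `π₀` makes `x₀₀ + x₁₀` and `x₀₁`
summable. By (S-wit) again `Sπ₀` and `ι₁ ∘ x₀₁` are summable, and `τ = Sπ₀ + ι₁ ∘ x₀₁` has
components `x₀₀` and `x₁₀ + x₀₁`. The flip exchanges `x₁₀` and `x₀₁`, so `τ ∘ c = τ` is the
commutativity of `+`, which comes from (S-com).
-/

open CategoryTheory Limits

universe v u

open PreSummability

/-- The defining equations of the monad multiplication `τ : S² ⟶ S`:
`π₀ ∘ τ = π₀ ∘ π₀` and `π₁ ∘ τ = π₀ ∘ π₁ + π₁ ∘ π₀`, together with naturality. -/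
def IsMult {C : Type u} [Category.{v} C] [HasZeroMorphisms C]
    (P : PreSummability C)
    (τ : ∀ X : C, P.S.obj (P.S.obj X) ⟶ P.S.obj X) : Prop :=
  (∀ {X Y : C} (f : X ⟶ Y), P.S.map (P.S.map f) ≫ τ Y = τ X ≫ P.S.map f) ∧
  (∀ X : C, τ X ≫ P.π0.app X = P.π0.app (P.S.obj X) ≫ P.π0.app X) ∧
  (∀ X : C, τ X ≫ P.π1.app X =
    P.sum (P.π1.app (P.S.obj X) ≫ P.π0.app X) (P.π0.app (P.S.obj X) ≫ P.π1.app X))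

namespace PreSummability

variable {C : Type u} [Category.{v} C] [HasZeroMorphisms C] {P : PreSummability C}

section

variable {Y X Z : C} {f₀ f₁ : Y ⟶ X}

lemma witness_π0 (hs : P.Summable f₀ f₁) : P.witness f₀ f₁ ≫ P.π0.app X = f₀ := by
  rw [witness, dif_pos hs]
  exact hs.choose_spec.1

lemma witness_π1 (hs : P.Summable f₀ f₁) : P.witness f₀ f₁ ≫ P.π1.app X = f₁ := by
  rw [witness, dif_pos hs]
  exact hs.choose_spec.2

lemma witness_eq {h : Y ⟶ P.S.obj X} (h₀ : h ≫ P.π0.app X = f₀) (h₁ : h ≫ P.π1.app X = f₁) :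
    P.witness f₀ f₁ = h :=
  have hs : P.Summable f₀ f₁ := ⟨h, h₀, h₁⟩
  P.jointly_monic _ _ (by rw [witness_π0 hs, h₀]) (by rw [witness_π1 hs, h₁])

lemma sum_eq_s12 {h : Y ⟶ P.S.obj X} (h₀ : h ≫ P.π0.app X = f₀) (h₁ : h ≫ P.π1.app X = f₁) :
    P.sum f₀ f₁ = h ≫ P.σ.app X := by
  rw [sum, witness_eq h₀ h₁]

lemma Summable.comp_left (hs : P.Summable f₀ f₁) (g : Z ⟶ Y) :
    P.Summable (g ≫ f₀) (g ≫ f₁) :=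
  ⟨g ≫ P.witness f₀ f₁, by simp [witness_π0 hs], by simp [witness_π1 hs]⟩

lemma Summable.comp_right (hs : P.Summable f₀ f₁) (g : X ⟶ Z) :
    P.Summable (f₀ ≫ g) (f₁ ≫ g) :=
  ⟨P.witness f₀ f₁ ≫ P.S.map g, by simp [reassoc_of% witness_π0 hs],
    by simp [reassoc_of% witness_π1 hs]⟩

lemma comp_sum (hs : P.Summable f₀ f₁) (g : Z ⟶ Y) :
    g ≫ P.sum f₀ f₁ = P.sum (g ≫ f₀) (g ≫ f₁) := by
  rw [sum_eq_s12 (h := g ≫ P.witness f₀ f₁) (by simp [witness_π0 hs]) (by simp [witness_π1 hs]),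
    sum, Category.assoc]

lemma sum_comp (hs : P.Summable f₀ f₁) (g : X ⟶ Z) :
    P.sum f₀ f₁ ≫ g = P.sum (f₀ ≫ g) (f₁ ≫ g) := by
  rw [sum_eq_s12 (h := P.witness f₀ f₁ ≫ P.S.map g) (by simp [reassoc_of% witness_π0 hs])
    (by simp [reassoc_of% witness_π1 hs]), sum]
  simp

end

variable (P) in
noncomputable def swap (X : C) : P.S.obj X ⟶ P.S.obj X := P.witness (P.π1.app X) (P.π0.app X)

lemma swap_π0 (hcom : P.SCom) (X : C) : P.swap X ≫ P.π0.app X = P.π1.app X :=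
  witness_π0 (hcom X).1

lemma swap_π1 (hcom : P.SCom) (X : C) : P.swap X ≫ P.π1.app X = P.π0.app X :=
  witness_π1 (hcom X).1

lemma swap_σ (hcom : P.SCom) (X : C) : P.swap X ≫ P.σ.app X = P.σ.app X :=
  (hcom X).2

section

variable {Y X : C} {f₀ f₁ : Y ⟶ X}

lemma Summable.symm (hcom : P.SCom) (hs : P.Summable f₀ f₁) : P.Summable f₁ f₀ :=
  ⟨P.witness f₀ f₁ ≫ P.swap X, by rw [Category.assoc, swap_π0 hcom, witness_π1 hs],
    by rw [Category.assoc, swap_π1 hcom, witness_π0 hs]⟩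

lemma sum_comm (hcom : P.SCom) (hs : P.Summable f₀ f₁) : P.sum f₁ f₀ = P.sum f₀ f₁ := by
  rw [sum_eq_s12 (h := P.witness f₀ f₁ ≫ P.swap X)
    (by rw [Category.assoc, swap_π0 hcom, witness_π1 hs])
    (by rw [Category.assoc, swap_π1 hcom, witness_π0 hs]), Category.assoc, swap_σ hcom, sum]

lemma summable_zero_left (hzero : P.SZero) (f : Y ⟶ X) : P.Summable 0 f := by
  simpa using (hzero X).1.comp_left f

lemma summable_zero_right (hcom : P.SCom) (hzero : P.SZero) (f : Y ⟶ X) : P.Summable f 0 :=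
  (summable_zero_left hzero f).symm hcom

lemma sum_zero_left (hzero : P.SZero) (f : Y ⟶ X) : P.sum 0 f = f := by
  simpa [(hzero X).2] using (comp_sum (hzero X).1 f).symm

lemma sum_zero_right (hcom : P.SCom) (hzero : P.SZero) (f : Y ⟶ X) : P.sum f 0 = f := by
  rw [sum_comm hcom (summable_zero_left hzero f), sum_zero_left hzero]

end

section

variable (P) in
noncomputable def ι₀ (X : C) : X ⟶ P.S.obj X := P.witness (𝟙 X) 0

variable (P) in
noncomputable def ι₁ (X : C) : X ⟶ P.S.obj X := P.witness 0 (𝟙 X)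

variable (X : C)

lemma ι₀_π0 (hcom : P.SCom) (hzero : P.SZero) : P.ι₀ X ≫ P.π0.app X = 𝟙 X :=
  witness_π0 (summable_zero_right hcom hzero _)

lemma ι₀_σ (hcom : P.SCom) (hzero : P.SZero) : P.ι₀ X ≫ P.σ.app X = 𝟙 X :=
  sum_zero_right hcom hzero _

lemma ι₁_π0 (hzero : P.SZero) : P.ι₁ X ≫ P.π0.app X = 0 := witness_π0 (hzero X).1

lemma ι₁_π1 (hzero : P.SZero) : P.ι₁ X ≫ P.π1.app X = 𝟙 X := witness_π1 (hzero X).1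

lemma ι₁_σ (hzero : P.SZero) : P.ι₁ X ≫ P.σ.app X = 𝟙 X := (hzero X).2

lemma summable_σ_π0_ι₀_map_π1 (hcom : P.SCom) (hzero : P.SZero) (hwit : P.SWit) :
    P.Summable (P.σ.app (P.S.obj X) ≫ P.π0.app X ≫ P.ι₀ X) (P.S.map (P.π1.app X)) :=
  hwit _ _ _ _ ⟨P.σ.app (P.S.obj X), by simp [ι₀_σ X hcom hzero], by simp⟩

lemma summable_σ_π0_π0_π1 (hcom : P.SCom) (hzero : P.SZero) (hwit : P.SWit) :
    P.Summable (P.σ.app (P.S.obj X) ≫ P.π0.app X) (P.π0.app (P.S.obj X) ≫ P.π1.app X) := by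
  simpa [ι₀_π0 X hcom hzero] using
    (summable_σ_π0_ι₀_map_π1 X hcom hzero hwit).comp_right (P.π0.app X)

lemma summable_map_π0_π0_π1_ι₁ (hcom : P.SCom) (hzero : P.SZero) (hwit : P.SWit) :
    P.Summable (P.S.map (P.π0.app X)) (P.π0.app (P.S.obj X) ≫ P.π1.app X ≫ P.ι₁ X) :=
  hwit _ _ _ _ (by simpa [ι₁_σ X hzero] using summable_σ_π0_π0_π1 X hcom hzero hwit)

lemma summable_π1_π0_π0_π1 (hcom : P.SCom) (hzero : P.SZero) (hwit : P.SWit) :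
    P.Summable (P.π1.app (P.S.obj X) ≫ P.π0.app X) (P.π0.app (P.S.obj X) ≫ P.π1.app X) := by
  simpa [ι₁_π1 X hzero] using
    (summable_map_π0_π0_π1_ι₁ X hcom hzero hwit).comp_right (P.π1.app X)

variable (P) in
noncomputable def mult : P.S.obj (P.S.obj X) ⟶ P.S.obj X :=
  P.sum (P.S.map (P.π0.app X)) (P.π0.app (P.S.obj X) ≫ P.π1.app X ≫ P.ι₁ X)

lemma mult_π0 (hcom : P.SCom) (hzero : P.SZero) (hwit : P.SWit) :
    P.mult X ≫ P.π0.app X = P.π0.app (P.S.obj X) ≫ P.π0.app X := by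
  rw [mult, sum_comp (summable_map_π0_π0_π1_ι₁ X hcom hzero hwit)]
  simp [ι₁_π0 X hzero, sum_zero_right hcom hzero]

lemma mult_π1 (hcom : P.SCom) (hzero : P.SZero) (hwit : P.SWit) :
    P.mult X ≫ P.π1.app X =
      P.sum (P.π1.app (P.S.obj X) ≫ P.π0.app X) (P.π0.app (P.S.obj X) ≫ P.π1.app X) := by
  rw [mult, sum_comp (summable_map_π0_π0_π1_ι₁ X hcom hzero hwit)]
  simp [ι₁_π1 X hzero]

end

lemma mult_naturality (hcom : P.SCom) (hzero : P.SZero) (hwit : P.SWit) {X Y : C} (f : X ⟶ Y) :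
    P.S.map (P.S.map f) ≫ P.mult Y = P.mult X ≫ P.S.map f := by
  apply P.jointly_monic
  · simp [mult_π0 _ hcom hzero hwit, reassoc_of% mult_π0 X hcom hzero hwit]
  · simp [mult_π1 _ hcom hzero hwit, reassoc_of% mult_π1 X hcom hzero hwit,
      comp_sum (summable_π1_π0_π0_π1 Y hcom hzero hwit),
      sum_comp (summable_π1_π0_π0_π1 X hcom hzero hwit)]

lemma isMult_mult (hcom : P.SCom) (hzero : P.SZero) (hwit : P.SWit) : IsMult P P.mult :=
  ⟨mult_naturality hcom hzero hwit, (mult_π0 · hcom hzero hwit), (mult_π1 · hcom hzero hwit)⟩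

end PreSummability

namespace IsMult

variable {C : Type u} [Category.{v} C] [HasZeroMorphisms C] {P : PreSummability C}
  {τ : ∀ X : C, P.S.obj (P.S.obj X) ⟶ P.S.obj X}

theorem unique {τ' : ∀ X : C, P.S.obj (P.S.obj X) ⟶ P.S.obj X} (hτ : IsMult P τ)
    (hτ' : IsMult P τ') : τ' = τ :=
  funext fun X => P.jointly_monic _ _ (by rw [hτ.2.1, hτ'.2.1]) (by rw [hτ.2.2, hτ'.2.2])

theorem flip_comp (hcom : P.SCom) (hzero : P.SZero) (hwit : P.SWit) (hτ : IsMult P τ) {X : C}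
    (c : P.S.obj (P.S.obj X) ⟶ P.S.obj (P.S.obj X))
    (hc : ∀ i j : Bool, c ≫ (P.pr j).app (P.S.obj X) ≫ (P.pr i).app X =
      (P.pr i).app (P.S.obj X) ≫ (P.pr j).app X) :
    c ≫ τ X = τ X := by
  have hc₀₀ : c ≫ P.π0.app (P.S.obj X) ≫ P.π0.app X = P.π0.app (P.S.obj X) ≫ P.π0.app X := by
    simpa [pr] using hc false false
  have hc₁₀ : c ≫ P.π1.app (P.S.obj X) ≫ P.π0.app X = P.π0.app (P.S.obj X) ≫ P.π1.app X := by
    simpa [pr] using hc false true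
  have hc₀₁ : c ≫ P.π0.app (P.S.obj X) ≫ P.π1.app X = P.π1.app (P.S.obj X) ≫ P.π0.app X := by
    simpa [pr] using hc true false
  have hcross := summable_π1_π0_π0_π1 X hcom hzero hwit
  apply P.jointly_monic
  · rw [Category.assoc, hτ.2.1, hc₀₀]
  · rw [Category.assoc, hτ.2.2, comp_sum hcross, hc₁₀, hc₀₁, sum_comm hcom hcross]

end IsMult

theorem stmt12_general {C : Type u} [Category.{v} C] [HasZeroMorphisms C]
    (P : PreSummability C) (hcom : P.SCom) (hzero : P.SZero) (hwit : P.SWit)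
    (c : ∀ X : C, P.S.obj (P.S.obj X) ⟶ P.S.obj (P.S.obj X))
    (hc : ∀ (X : C) (i j : Bool),
      c X ≫ (P.pr j).app (P.S.obj X) ≫ (P.pr i).app X =
        (P.pr i).app (P.S.obj X) ≫ (P.pr j).app X) :
    (∃! τ : ∀ X : C, P.S.obj (P.S.obj X) ⟶ P.S.obj X, IsMult P τ) ∧
    (∀ τ : ∀ X : C, P.S.obj (P.S.obj X) ⟶ P.S.obj X, IsMult P τ →
      ∀ X : C, c X ≫ τ X = τ X) :=
  ⟨⟨P.mult, isMult_mult hcom hzero hwit, fun _ hτ => (isMult_mult hcom hzero hwit).unique hτ⟩,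
    fun _ hτ X => hτ.flip_comp hcom hzero hwit (c X) (hc X)⟩

theorem stmt12 {C : Type u} [Category.{v} C] [HasZeroMorphisms C]
    (P : PreSummability C) (hcom : P.SCom) (hzero : P.SZero) (hwit : P.SWit)
    (c : ∀ X : C, P.S.obj (P.S.obj X) ⟶ P.S.obj (P.S.obj X))
    (hcnat : ∀ {X Y : C} (f : X ⟶ Y),
      P.S.map (P.S.map f) ≫ c Y = c X ≫ P.S.map (P.S.map f))
    (hc : ∀ (X : C) (i j : Bool),
      c X ≫ (P.pr j).app (P.S.obj X) ≫ (P.pr i).app X =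
        (P.pr i).app (P.S.obj X) ≫ (P.pr j).app X) :
    (∃! τ : ∀ X : C, P.S.obj (P.S.obj X) ⟶ P.S.obj X, IsMult P τ) ∧
    (∀ τ : ∀ X : C, P.S.obj (P.S.obj X) ⟶ P.S.obj X, IsMult P τ →
      ∀ X : C, c X ≫ τ X = τ X) :=
  stmt12_general P hcom hzero hwit c hc
end

section
/- Let E and F be coherence spaces and let t be a morphism of the Kleisli category of the Girard exponential, i.e. a clique of !E ⊸ F. Let x be a clique of E, let E_x be the coherence space with web {a′ ∈ |E| : ∀a ∈ x, a ¨_E a′ and a ≠ a′} and coherence inherited from E, and let t′(x) = {(a′, b) ∈ |E_x| × |F| : ∃ x₀ ⊆ x, (x₀ ∪ {a′}, b) ∈ t}. Then: (1) t′(x) is a clique of E_x ⊸ F_{⟦t⟧(x)}, i.e. a linear morphism from E_x to F_{⟦t⟧(x)}; (2) for every clique u of E_x, ⟦t′(x)⟧u = ⋃_{a∈u} (⟦t⟧(x ∪ {a}) ∖ ⟦t⟧(x)), and in particular ⟦t⟧(x) and ⟦t′(x)⟧u are disjoint with ⟦t⟧(x) ∪ ⟦t′(x)⟧u ⊆ ⟦t⟧(x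 ∪ u); (3) t′(x) is the greatest such linear approximation: every clique h of E_x ⊸ F_{⟦t⟧(x)} satisfying ⟦h⟧u ⊆ ⟦t⟧(x ∪ u) ∖ ⟦t⟧(x) for all cliques u of E_x satisfies h ⊆ t′(x). -/
/-!
Everything rests on one characterisation: for `a ∈ |E_x|`,
`(a, b) ∈ t′(x) ↔ b ∈ ⟦t⟧(x ∪ {a}) ∖ ⟦t⟧(x)`.
The hard direction is that a point `b` produced by some `(insert a x₀, b) ∈ t` with `x₀ ⊆ x`
cannot also be produced by some `(x₁, b) ∈ t` with `x₁ ⊆ x`: both sources lie in the clique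
`x ∪ {a}`, so the coherence of `t` forces `insert a x₀ = x₁ ⊆ x`, contradicting `a ∉ x`.
The same coherence argument on the clique `x ∪ {a, a'}` gives linearity of `t′(x)`, and the
maximality statement is the characterisation applied to singletons `u = {a}`.
-/

open Set

/-- `s` is a clique for the coherence relation `coh`. -/
def IsClique {γ : Type*} (coh : γ → γ → Prop) (s : Set γ) : Prop :=
  ∀ a ∈ s, ∀ a' ∈ s, coh a a'

/-- The stable function associated with a Kleisli morphism `t` (a clique of
`!E ⊸ F`): `⟦t⟧(x) = {b | ∃ x₀ ⊆ x, (x₀, b) ∈ t}`. -/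
def funApp {α β : Type*} (t : Set (Set α × β)) (x : Set α) : Set β :=
  {b | ∃ x₀ ⊆ x, (x₀, b) ∈ t}

/-- The web of the coherence space `E_y` of strict extensions of a clique `y`:
all points strictly coherent with every point of `y`. -/
def webSub {γ : Type*} (coh : γ → γ → Prop) (y : Set γ) : Set γ :=
  {c | ∀ a ∈ y, coh a c ∧ a ≠ c}

/-- The derivative `t′(x)` of a Kleisli morphism `t` at a clique `x`. -/
def cohDeriv {α β : Type*} (cohE : α → α → Prop) (t : Set (Set α × β)) (x : Set α) :
    Set (α × β) :=
  {p | p.1 ∈ webSub cohE x ∧ ∃ x₀ ⊆ x, (insert p.1 x₀, p.2) ∈ t}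

/-- The application `⟦h⟧u` of a linear morphism (a set of pairs) to a clique. -/
def linApp {α β : Type*} (h : Set (α × β)) (u : Set α) : Set β :=
  {b | ∃ a ∈ u, (a, b) ∈ h}

section Clique

variable {γ : Type*} {coh : γ → γ → Prop}

theorem IsClique.subset {s s' : Set γ} (h : IsClique coh s') (hss : s ⊆ s') :
    IsClique coh s :=
  fun a ha a' ha' => h a (hss ha) a' (hss ha')

theorem isClique_singleton (hrefl : ∀ a, coh a a) (a : γ) : IsClique coh {a} := by
  rintro c rfl c' rfl
  exact hrefl _

theorem isClique_pair (hrefl : ∀ a, coh a a) (hsymm : ∀ a a', coh a a' → coh a' a)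
    {a a' : γ} (h : coh a a') : IsClique coh {a, a'} := by
  rintro c (rfl | rfl) c' (rfl | rfl)
  exacts [hrefl _, h, hsymm _ _ h, hrefl _]

theorem notMem_of_mem_webSub {y : Set γ} {c : γ} (hc : c ∈ webSub coh y) : c ∉ y :=
  fun hy => (hc c hy).2 rfl

theorem IsClique.union_of_subset_webSub (hsymm : ∀ a a', coh a a' → coh a' a)
    {x u : Set γ} (hx : IsClique coh x) (hu : IsClique coh u) (hux : u ⊆ webSub coh x) :
    IsClique coh (x ∪ u) := by
  rintro c (hc | hc) c' (hc' | hc')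
  · exact hx c hc c' hc'
  · exact (hux hc' c hc).1
  · exact hsymm _ _ (hux hc c' hc').1
  · exact hu c hc c' hc'

end Clique

section Derivative

variable {α β : Type*} {cohE : α → α → Prop} {cohF : β → β → Prop} {t : Set (Set α × β)}
  {x : Set α}

theorem funApp_mono {x y : Set α} (hxy : x ⊆ y) : funApp t x ⊆ funApp t y :=
  fun _ ⟨x₀, h0, ht0⟩ => ⟨x₀, h0.trans hxy, ht0⟩

theorem exists_insert_mem_of_mem_funApp_insert_diff {a : α} {b : β}
    (hb : b ∈ funApp t (insert a x) \ funApp t x) : ∃ x₀ ⊆ x, (insert a x₀, b) ∈ t := by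
  obtain ⟨⟨x₀, h0, ht0⟩, hbx⟩ := hb
  have ha : a ∈ x₀ := by
    by_contra ha
    exact hbx ⟨x₀, (subset_insert_iff_of_notMem ha).mp h0, ht0⟩
  refine ⟨x₀ \ {a}, sdiff_singleton_subset_iff.mpr h0, ?_⟩
  rwa [insert_sdiff_singleton, insert_eq_of_mem ha]

variable (hErefl : ∀ a, cohE a a) (hEsymm : ∀ a a', cohE a a' → cohE a' a)
  (ht_coh : ∀ p ∈ t, ∀ q ∈ t, IsClique cohE (p.1 ∪ q.1) →
    cohF p.2 q.2 ∧ (p.2 = q.2 → p.1 = q.1))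
  (hx : IsClique cohE x)
include hErefl hEsymm ht_coh hx

theorem coh_of_insert_mem_of_mem_funApp {a : α} (ha : a ∈ webSub cohE x) {x₀ : Set α}
    (h0 : x₀ ⊆ x) {b b' : β} (hb : (insert a x₀, b) ∈ t) (hb' : b' ∈ funApp t x) :
    cohF b' b ∧ b' ≠ b := by
  obtain ⟨x₁, h1, ht1⟩ := hb'
  have hcl : IsClique cohE (x ∪ {a}) :=
    hx.union_of_subset_webSub hEsymm (isClique_singleton hErefl a) (singleton_subset_iff.mpr ha)
  obtain ⟨hF, hsrc⟩ := ht_coh _ ht1 _ hb <| hcl.subset <|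
    union_subset (h1.trans subset_union_left) (insert_subset (by simp) (h0.trans subset_union_left))
  refine ⟨hF, fun hbb => notMem_of_mem_webSub ha (h1 ?_)⟩
  have hsrc' : x₁ = insert a x₀ := hsrc hbb
  exact hsrc' ▸ mem_insert a x₀

theorem mem_cohDeriv_iff {a : α} {b : β} :
    (a, b) ∈ cohDeriv cohE t x ↔
      a ∈ webSub cohE x ∧ b ∈ funApp t (insert a x) \ funApp t x := by
  refine ⟨fun ⟨ha, x₀, h0, ht0⟩ => ⟨ha, ⟨insert a x₀, insert_subset_insert h0, ht0⟩, ?_⟩,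
    fun ⟨ha, hb⟩ => ⟨ha, exists_insert_mem_of_mem_funApp_insert_diff hb⟩⟩
  exact fun hbx => (coh_of_insert_mem_of_mem_funApp hErefl hEsymm ht_coh hx ha h0 ht0 hbx).2 rfl

theorem snd_mem_webSub_of_mem_cohDeriv {p : α × β} (hp : p ∈ cohDeriv cohE t x) :
    p.2 ∈ webSub cohF (funApp t x) := by
  obtain ⟨ha, x₀, h0, ht0⟩ := hp
  exact fun b' hb' => coh_of_insert_mem_of_mem_funApp hErefl hEsymm ht_coh hx ha h0 ht0 hb'

theorem cohDeriv_coh {p q : α × β} (hp : p ∈ cohDeriv cohE t x) (hq : q ∈ cohDeriv cohE t x)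
    (hpq : cohE p.1 q.1) : cohF p.2 q.2 ∧ (p.2 = q.2 → p.1 = q.1) := by
  obtain ⟨hpw, x₀, h0, ht0⟩ := hp
  obtain ⟨hqw, x₁, h1, ht1⟩ := hq
  have hcl : IsClique cohE (x ∪ {p.1, q.1}) :=
    hx.union_of_subset_webSub hEsymm (isClique_pair hErefl hEsymm hpq)
      (insert_subset hpw (singleton_subset_iff.mpr hqw))
  obtain ⟨hF, hsrc⟩ := ht_coh _ ht0 _ ht1 <| hcl.subset <| union_subset
    (insert_subset (by simp) (h0.trans subset_union_left))
    (insert_subset (by simp) (h1.trans subset_union_left))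
  refine ⟨hF, fun hbb => ?_⟩
  have hsrc' : insert p.1 x₀ = insert q.1 x₁ := hsrc hbb
  have hq0 : q.1 ∈ insert p.1 x₀ := hsrc' ▸ mem_insert q.1 x₁
  rcases hq0 with hqp | hqx
  · exact hqp.symm
  · exact absurd (h0 hqx) (notMem_of_mem_webSub hqw)

theorem linApp_cohDeriv {u : Set α} (hu : u ⊆ webSub cohE x) :
    linApp (cohDeriv cohE t x) u = ⋃ a ∈ u, funApp t (insert a x) \ funApp t x := by
  ext b
  simp only [linApp, mem_ofPred_eq, mem_iUnion, exists_prop]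
  refine exists_congr fun a => and_congr_right fun hau => ?_
  rw [mem_cohDeriv_iff hErefl hEsymm ht_coh hx, and_iff_right (hu hau)]

theorem disjoint_funApp_linApp_cohDeriv {u : Set α} (hu : u ⊆ webSub cohE x) :
    Disjoint (funApp t x) (linApp (cohDeriv cohE t x) u) := by
  rw [linApp_cohDeriv hErefl hEsymm ht_coh hx hu, disjoint_iUnion₂_right]
  exact fun _ _ => disjoint_sdiff_right

theorem funApp_union_linApp_cohDeriv_subset {u : Set α} (hu : u ⊆ webSub cohE x) :
    funApp t x ∪ linApp (cohDeriv cohE t x) u ⊆ funApp t (x ∪ u) := by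
  rw [linApp_cohDeriv hErefl hEsymm ht_coh hx hu]
  refine union_subset (funApp_mono subset_union_left) (iUnion₂_subset fun a hau => ?_)
  exact sdiff_subset.trans (funApp_mono (insert_subset (Or.inr hau) subset_union_left))

theorem subset_cohDeriv {h : Set (α × β)} (hweb : ∀ p ∈ h, p.1 ∈ webSub cohE x)
    (happ : ∀ u : Set α, u ⊆ webSub cohE x → IsClique cohE u →
      linApp h u ⊆ funApp t (x ∪ u) \ funApp t x) :
    h ⊆ cohDeriv cohE t x := by
  rintro ⟨a, b⟩ hp
  have ha : a ∈ webSub cohE x := hweb _ hp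
  have hb := happ {a} (singleton_subset_iff.mpr ha) (isClique_singleton hErefl a) ⟨a, rfl, hp⟩
  rw [union_singleton] at hb
  exact (mem_cohDeriv_iff hErefl hEsymm ht_coh hx).mpr ⟨ha, hb⟩

end Derivative

theorem stmt19_general {α β : Type*} (cohE : α → α → Prop) (cohF : β → β → Prop)
    (hErefl : ∀ a, cohE a a) (hEsymm : ∀ a a', cohE a a' → cohE a' a)
    (t : Set (Set α × β))
    -- … which is a clique of `!E ⊸ F`
    (ht_coh : ∀ p ∈ t, ∀ q ∈ t, IsClique cohE (p.1 ∪ q.1) →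
      cohF p.2 q.2 ∧ (p.2 = q.2 → p.1 = q.1))
    (x : Set α) (hx : IsClique cohE x) :
    -- (1) `t′(x)` is a clique of `E_x ⊸ F_{⟦t⟧(x)}`
    ((∀ p ∈ cohDeriv cohE t x, (p.2 : β) ∈ webSub cohF (funApp t x)) ∧
      (∀ p ∈ cohDeriv cohE t x, ∀ q ∈ cohDeriv cohE t x,
        cohE p.1 q.1 → cohF p.2 q.2 ∧ (p.2 = q.2 → p.1 = q.1))) ∧
    -- (2) the action of `t′(x)` on cliques of `E_x`
    (∀ u : Set α, u ⊆ webSub cohE x → IsClique cohE u →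
      linApp (cohDeriv cohE t x) u = (⋃ a ∈ u, funApp t (insert a x) \ funApp t x) ∧
      Disjoint (funApp t x) (linApp (cohDeriv cohE t x) u) ∧
      funApp t x ∪ linApp (cohDeriv cohE t x) u ⊆ funApp t (x ∪ u)) ∧
    -- (3) maximality of `t′(x)` among linear under-approximations
    (∀ h : Set (α × β),
      (∀ p ∈ h, (p.1 : α) ∈ webSub cohE x ∧ (p.2 : β) ∈ webSub cohF (funApp t x)) →
      (∀ p ∈ h, ∀ q ∈ h, cohE p.1 q.1 → cohF p.2 q.2 ∧ (p.2 = q.2 → p.1 = q.1)) →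
      (∀ u : Set α, u ⊆ webSub cohE x → IsClique cohE u →
        linApp h u ⊆ funApp t (x ∪ u) \ funApp t x) →
      h ⊆ cohDeriv cohE t x) :=
  ⟨⟨fun _ hp => snd_mem_webSub_of_mem_cohDeriv hErefl hEsymm ht_coh hx hp,
      fun _ hp _ hq => cohDeriv_coh hErefl hEsymm ht_coh hx hp hq⟩,
    fun _ hu _ => ⟨linApp_cohDeriv hErefl hEsymm ht_coh hx hu,
      disjoint_funApp_linApp_cohDeriv hErefl hEsymm ht_coh hx hu,
      funApp_union_linApp_cohDeriv_subset hErefl hEsymm ht_coh hx hu⟩,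
    fun _ hweb _ happ => subset_cohDeriv hErefl hEsymm ht_coh hx (fun p hp => (hweb p hp).1) happ⟩

theorem stmt19 {α β : Type*} (cohE : α → α → Prop) (cohF : β → β → Prop)
    (hErefl : ∀ a, cohE a a) (hEsymm : ∀ a a', cohE a a' → cohE a' a)
    (hFrefl : ∀ b, cohF b b) (hFsymm : ∀ b b', cohF b b' → cohF b' b)
    (t : Set (Set α × β))
    -- `t` is a set of pairs (finite clique of `E`, point of `F`) …
    (ht_fin : ∀ p ∈ t, (p.1 : Set α).Finite)
    (ht_cl : ∀ p ∈ t, IsClique cohE p.1)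
    -- … which is a clique of `!E ⊸ F`
    (ht_coh : ∀ p ∈ t, ∀ q ∈ t, IsClique cohE (p.1 ∪ q.1) →
      cohF p.2 q.2 ∧ (p.2 = q.2 → p.1 = q.1))
    (x : Set α) (hx : IsClique cohE x) :
    -- (1) `t′(x)` is a clique of `E_x ⊸ F_{⟦t⟧(x)}`
    ((∀ p ∈ cohDeriv cohE t x, (p.2 : β) ∈ webSub cohF (funApp t x)) ∧
      (∀ p ∈ cohDeriv cohE t x, ∀ q ∈ cohDeriv cohE t x,
        cohE p.1 q.1 → cohF p.2 q.2 ∧ (p.2 = q.2 → p.1 = q.1))) ∧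
    -- (2) the action of `t′(x)` on cliques of `E_x`
    (∀ u : Set α, u ⊆ webSub cohE x → IsClique cohE u →
      linApp (cohDeriv cohE t x) u = (⋃ a ∈ u, funApp t (insert a x) \ funApp t x) ∧
      Disjoint (funApp t x) (linApp (cohDeriv cohE t x) u) ∧
      funApp t x ∪ linApp (cohDeriv cohE t x) u ⊆ funApp t (x ∪ u)) ∧
    -- (3) maximality of `t′(x)` among linear under-approximations
    (∀ h : Set (α × β),
      (∀ p ∈ h, (p.1 : α) ∈ webSub cohE x ∧ (p.2 : β) ∈ webSub cohF (funApp t x)) →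
      (∀ p ∈ h, ∀ q ∈ h, cohE p.1 q.1 → cohF p.2 q.2 ∧ (p.2 = q.2 → p.1 = q.1)) →
      (∀ u : Set α, u ⊆ webSub cohE x → IsClique cohE u →
        linApp h u ⊆ funApp t (x ∪ u) \ funApp t x) →
      h ⊆ cohDeriv cohE t x) :=
  stmt19_general cohE cohF hErefl hEsymm t ht_coh x hx
end
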